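/- arXiv:1507.05746 — 6 statements merged into one kernel-verified Lean document; each statement's English description precedes it below -/
import Mathlib

section
/- If π is an invariant distribution of the random walk (m̄_c(t)), then λ₁ + λ₂p₂·P(1,0) − μ₁c₁ = λ₁·P(0,1) + λ₂p₂·π(0,0), where P(1,0) = Σ_{m₁∈ℕ} π(m₁,0) and P(0,1) = Σ_{m₂∈ℕ} π(0,m₂). -/
/-!
The balance equation at a state says that the net probability flux out of it vanishes.
Summing it over a row `{m1} × ℕ`, the vertical fluxes telescope, so the total flux from row
`m1` to row `m1 + 1` equals the one from row `m1 - 1` to row `m1`, and at `m1 = 0` there is no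
lower row. Hence `μ₁c₁·P(row m1) = λ₁·P(row m1+1) + p₂λ₂·π(m1+1, 0)` for every `m1`, and summing
over `m1` gives the identity.
-/

/-- π is an invariant (stationary) probability distribution of the random walk (m̄_l(t)):
nonnegative, sums to 1, and satisfies the balance equations. -/
def IsInvariantDist (la1 la2 mu1 mu2 l1 l2 p1 p2 : ℝ) (π : ℕ × ℕ → ℝ) : Prop :=
  (∀ m, 0 ≤ π m) ∧ (∑' m : ℕ × ℕ, π m = 1) ∧
  ∀ m1 m2 : ℕ,
    π (m1, m2) * (mu1 * l1 + mu2 * l2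
        + (la1 + p2 * la2 * (if m2 = 0 then 1 else 0)) * (if 0 < m1 then 1 else 0)
        + (la2 + p1 * la1 * (if m1 = 0 then 1 else 0)) * (if 0 < m2 then 1 else 0))
    = mu1 * l1 * π (m1 - 1, m2) * (if 0 < m1 then 1 else 0)
      + mu2 * l2 * π (m1, m2 - 1) * (if 0 < m2 then 1 else 0)
      + (la1 + p2 * la2 * (if m2 = 0 then 1 else 0)) * π (m1 + 1, m2)
      + (la2 + p1 * la1 * (if m1 = 0 then 1 else 0)) * π (m1, m2 + 1)

theorem hasSum_sub_ite_pred {G : Type*} [AddCommGroup G] [TopologicalSpace G]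
    [IsTopologicalAddGroup G] {g : ℕ → G} (hg : Summable g) :
    HasSum (fun n => g n - if 0 < n then g (n - 1) else 0) 0 := by
  rw [← hasSum_nat_add_iff' 1]
  simpa using (hg.hasSum.sub ((hasSum_nat_add_iff' 1).2 hg.hasSum)).neg

section Flows

variable (la1 la2 mu1 mu2 c1 c2 p1 p2 : ℝ) (π : ℕ × ℕ → ℝ)

/-- Net probability flux through the edge from `(m1, m2)` to `(m1 + 1, m2)`. -/
def horizFlow (m1 m2 : ℕ) : ℝ :=
  mu1 * c1 * π (m1, m2) - (la1 + p2 * la2 * (if m2 = 0 then 1 else 0)) * π (m1 + 1, m2)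

def vertFlow (m1 m2 : ℕ) : ℝ :=
  mu2 * c2 * π (m1, m2) - (la2 + p1 * la1 * (if m1 = 0 then 1 else 0)) * π (m1, m2 + 1)

noncomputable def rowMass (m1 : ℕ) : ℝ :=
  ∑' m2, π (m1, m2)

end Flows

namespace IsInvariantDist

variable {la1 la2 mu1 mu2 c1 c2 p1 p2 : ℝ} {π : ℕ × ℕ → ℝ}
  (hπ : IsInvariantDist la1 la2 mu1 mu2 c1 c2 p1 p2 π)
include hπ

/-- The balance equation says that the flux field has zero divergence. -/
theorem flow_balance (m1 m2 : ℕ) :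
    (horizFlow la1 la2 mu1 c1 p2 π m1 m2
        - if 0 < m1 then horizFlow la1 la2 mu1 c1 p2 π (m1 - 1) m2 else 0)
      + (vertFlow la1 la2 mu2 c2 p1 π m1 m2
        - if 0 < m2 then vertFlow la1 la2 mu2 c2 p1 π m1 (m2 - 1) else 0) = 0 := by
  have h := hπ.2.2 m1 m2
  rcases m1 with _ | m1 <;> rcases m2 with _ | m2 <;>
    simp [horizFlow, vertFlow] at h ⊢ <;> linear_combination h

theorem summable : Summable π := by
  by_contra h
  simpa [tsum_eq_zero_of_not_summable h] using hπ.2.1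

theorem hasSum_row (m1 : ℕ) : HasSum (fun m2 => π (m1, m2)) (rowMass π m1) :=
  (hπ.summable.comp_injective (Prod.mk_right_injective m1)).hasSum

theorem hasSum_rowMass : HasSum (rowMass π) 1 :=
  hπ.2.1 ▸ hπ.summable.hasSum.prod_fiberwise hπ.hasSum_row

theorem hasSum_horizFlow_row (m1 : ℕ) :
    HasSum (horizFlow la1 la2 mu1 c1 p2 π m1)
      (mu1 * c1 * rowMass π m1 - la1 * rowMass π (m1 + 1) - p2 * la2 * π (m1 + 1, 0)) := by
  refine (((hπ.hasSum_row m1).mul_left (mu1 * c1)).sub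
    ((hπ.hasSum_row (m1 + 1)).mul_left la1) |>.sub
      (hasSum_ite_eq 0 (p2 * la2 * π (m1 + 1, 0)))).congr_fun fun m2 => ?_
  rcases m2 with _ | m2 <;> simp [horizFlow]
  ring

theorem summable_vertFlow_row (m1 : ℕ) : Summable (vertFlow la1 la2 mu2 c2 p1 π m1) :=
  ((hπ.hasSum_row m1).summable.mul_left _).sub
    (((summable_nat_add_iff 1).2 (hπ.hasSum_row m1).summable).mul_left _)

/-- Summing the balance equations along a row, the vertical fluxes telescope away. -/
theorem hasSum_horizFlow_sub_row (m1 : ℕ) :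
    HasSum (fun m2 => horizFlow la1 la2 mu1 c1 p2 π m1 m2
      - if 0 < m1 then horizFlow la1 la2 mu1 c1 p2 π (m1 - 1) m2 else 0) 0 := by
  simpa [eq_neg_of_add_eq_zero_left (hπ.flow_balance m1 _)] using
    (hasSum_sub_ite_pred (hπ.summable_vertFlow_row m1)).neg

theorem hasSum_horizFlow_zero (m1 : ℕ) : HasSum (horizFlow la1 la2 mu1 c1 p2 π m1) 0 := by
  induction m1 with
  | zero => simpa using hπ.hasSum_horizFlow_sub_row 0
  | succ k ih => simpa using (hπ.hasSum_horizFlow_sub_row (k + 1)).add ih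

theorem cut_balance (m1 : ℕ) :
    mu1 * c1 * rowMass π m1 = la1 * rowMass π (m1 + 1) + p2 * la2 * π (m1 + 1, 0) := by
  linarith [(hπ.hasSum_horizFlow_row m1).unique (hπ.hasSum_horizFlow_zero m1)]

end IsInvariantDist

theorem stmt1_general (la1 la2 mu1 mu2 c1 c2 p1 p2 : ℝ)
    (π : ℕ × ℕ → ℝ) (hπ : IsInvariantDist la1 la2 mu1 mu2 c1 c2 p1 p2 π) :
    la1 + la2 * p2 * (∑' m1 : ℕ, π (m1, 0)) - mu1 * c1
      = la1 * (∑' m2 : ℕ, π (0, m2)) + la2 * p2 * π (0, 0) := by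
  have hcol : HasSum (fun m1 => π (m1, 0)) (∑' m1, π (m1, 0)) :=
    (hπ.summable.comp_injective (Prod.mk_left_injective 0)).hasSum
  have hleft : HasSum (fun m1 => mu1 * c1 * rowMass π m1) (mu1 * c1) := by
    simpa using hπ.hasSum_rowMass.mul_left (mu1 * c1)
  have hright : HasSum (fun m1 => la1 * rowMass π (m1 + 1) + p2 * la2 * π (m1 + 1, 0))
      (la1 * (1 - rowMass π 0) + p2 * la2 * ((∑' m1, π (m1, 0)) - π (0, 0))) := by
    refine HasSum.add (HasSum.mul_left _ ?_) (HasSum.mul_left _ ?_)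
    · simpa using (hasSum_nat_add_iff' 1).2 hπ.hasSum_rowMass
    · simpa using (hasSum_nat_add_iff' 1).2 hcol
  rw [funext hπ.cut_balance] at hleft
  have hmass := hleft.unique hright
  simp only [rowMass] at hmass
  linarith

theorem stmt1 (la1 la2 mu1 mu2 c1 c2 p1 p2 : ℝ)
    (hla1 : 0 < la1) (hla2 : 0 < la2) (hmu1 : 0 < mu1) (hmu2 : 0 < mu2)
    (hc1 : 0 < c1) (hc2 : 0 < c2)
    (hp1 : 0 ≤ p1) (hp1' : p1 ≤ 1) (hp2 : 0 ≤ p2) (hp2' : p2 ≤ 1)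
    (π : ℕ × ℕ → ℝ) (hπ : IsInvariantDist la1 la2 mu1 mu2 c1 c2 p1 p2 π) :
    la1 + la2 * p2 * (∑' m1 : ℕ, π (m1, 0)) - mu1 * c1
      = la1 * (∑' m2 : ℕ, π (0, m2)) + la2 * p2 * π (0, 0) :=
  stmt1_general la1 la2 mu1 mu2 c1 c2 p1 p2 π hπ
end

section
/- If π is an invariant distribution of the random walk (m̄_c(t)), then λ₂ + λ₁p₁·P(0,1) − μ₂c₂ = λ₂·P(1,0) + λ₁p₁·π(0,0), where P(1,0) = Σ_{m₁∈ℕ} π(m₁,0) and P(0,1) = Σ_{m₂∈ℕ} π(0,m₂). -/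
section IndicatorSums

variable {α : Type*} [Ring α] [TopologicalSpace α]

theorem hasSum_ite_eq_zero_mul (f : ℕ → α) :
    HasSum (fun n => (if n = 0 then 1 else 0) * f n) (f 0) := by
  simpa only [ite_mul, one_mul, zero_mul] using
    (hasSum_ite_eq 0 (f 0)).congr_fun fun n => by split_ifs with h <;> simp [h]

variable [IsTopologicalAddGroup α] {f : ℕ → α} {a : α}

theorem HasSum.nat_succ (hf : HasSum f a) : HasSum (fun n => f (n + 1)) (a - f 0) := by
  simpa using (hasSum_nat_add_iff' 1).mpr hf

theorem HasSum.ite_pos_mul (hf : HasSum f a) :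
    HasSum (fun n => (if 0 < n then 1 else 0) * f n) (a - f 0) :=
  (hf.sub (hasSum_ite_eq_zero_mul f)).congr_fun fun n => by
    rcases n.eq_zero_or_pos with rfl | hn <;> simp [*, Nat.pos_iff_ne_zero.mp]

theorem HasSum.pred_mul_ite_pos (hf : HasSum f a) :
    HasSum (fun n => f (n - 1) * (if 0 < n then 1 else 0)) a := by
  simpa using (hasSum_nat_add_iff' 1).mp (by simpa using hf)

end IndicatorSums

noncomputable def sndMarginal (π : ℕ × ℕ → ℝ) (j : ℕ) : ℝ := ∑' m, π (m, j)

section Marginal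

variable {π : ℕ × ℕ → ℝ}

theorem Summable.hasSum_sndMarginal (hπ : Summable π) (j : ℕ) :
    HasSum (fun m => π (m, j)) (sndMarginal π j) :=
  (hπ.comp_injective (Prod.mk_left_injective j)).hasSum

theorem HasSum.sndMarginal {a : ℝ} (hπ : HasSum π a) : HasSum (sndMarginal π) a :=
  ((Equiv.prodComm ℕ ℕ).hasSum_iff.mpr hπ).prod_fiberwise fun j =>
    hπ.summable.hasSum_sndMarginal j

end Marginal

namespace IsInvariantDist

variable {la1 la2 mu1 mu2 l1 l2 p1 p2 : ℝ} {π : ℕ × ℕ → ℝ}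

theorem hasSum (hπ : IsInvariantDist la1 la2 mu1 mu2 l1 l2 p1 p2 π) : HasSum π 1 := by
  have hs : Summable π := by
    by_contra h
    simpa [tsum_eq_zero_of_not_summable h] using hπ.2.1
  exact hπ.2.1 ▸ hs.hasSum

theorem sndMarginal_balance (hπ : IsInvariantDist la1 la2 mu1 mu2 l1 l2 p1 p2 π) (j : ℕ) :
    mu2 * l2 * sndMarginal π j
        + (if 0 < j then 1 else 0) * (la2 * sndMarginal π j + p1 * la1 * π (0, j))
      = (if 0 < j then 1 else 0) * (mu2 * l2 * sndMarginal π (j - 1))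
        + (la2 * sndMarginal π (j + 1) + p1 * la1 * π (0, j + 1)) := by
  have hs := hπ.hasSum.summable
  have row := hs.hasSum_sndMarginal j
  have below := hs.hasSum_sndMarginal (j - 1)
  have above := hs.hasSum_sndMarginal (j + 1)
  have outflow := ((row.mul_left (mu1 * l1 + mu2 * l2 + la2 * (if 0 < j then 1 else 0))).add
    (row.ite_pos_mul.mul_left (la1 + p2 * la2 * (if j = 0 then 1 else 0)))).add
    ((hasSum_ite_eq_zero_mul fun m => π (m, j)).mul_left (p1 * la1 * (if 0 < j then 1 else 0)))
  have inflow := ((((row.pred_mul_ite_pos.mul_left (mu1 * l1)).add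
    (below.mul_left (mu2 * l2 * (if 0 < j then 1 else 0)))).add
    (row.nat_succ.mul_left (la1 + p2 * la2 * (if j = 0 then 1 else 0)))).add
    (above.mul_left la2)).add
    ((hasSum_ite_eq_zero_mul fun m => π (m, j + 1)).mul_left (p1 * la1))
  have h := outflow.unique <| inflow.congr_fun fun m => by linear_combination hπ.2.2 m j
  linear_combination h

theorem flux_balance (hπ : IsInvariantDist la1 la2 mu1 mu2 l1 l2 p1 p2 π) (j : ℕ) :
    mu2 * l2 * sndMarginal π j = la2 * sndMarginal π (j + 1) + p1 * la1 * π (0, j + 1) := by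
  induction j with
  | zero => simpa using hπ.sndMarginal_balance 0
  | succ j ih =>
    have h := hπ.sndMarginal_balance (j + 1)
    simp only [Nat.succ_pos, if_true, one_mul, Nat.add_sub_cancel] at h
    linarith

end IsInvariantDist

theorem stmt2_general (la1 la2 mu1 mu2 c1 c2 p1 p2 : ℝ)
    (π : ℕ × ℕ → ℝ) (hπ : IsInvariantDist la1 la2 mu1 mu2 c1 c2 p1 p2 π) :
    la2 + la1 * p1 * (∑' m2 : ℕ, π (0, m2)) - mu2 * c2
      = la2 * (∑' m1 : ℕ, π (m1, 0)) + la1 * p1 * π (0, 0) := by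
  have total := hπ.hasSum.sndMarginal
  have column := (hπ.hasSum.summable.prod_factor 0).hasSum
  have upward := total.mul_left (mu2 * c2)
  have downward := (total.nat_succ.mul_left la2).add (column.nat_succ.mul_left (p1 * la1))
  have h := upward.unique (downward.congr_fun hπ.flux_balance)
  rw [sndMarginal] at h
  linear_combination -h

theorem stmt2 (la1 la2 mu1 mu2 c1 c2 p1 p2 : ℝ)
    (hla1 : 0 < la1) (hla2 : 0 < la2) (hmu1 : 0 < mu1) (hmu2 : 0 < mu2)
    (hc1 : 0 < c1) (hc2 : 0 < c2)
    (hp1 : 0 ≤ p1) (hp1' : p1 ≤ 1) (hp2 : 0 ≤ p2) (hp2' : p2 ≤ 1)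
    (π : ℕ × ℕ → ℝ) (hπ : IsInvariantDist la1 la2 mu1 mu2 c1 c2 p1 p2 π) :
    la2 + la1 * p1 * (∑' m2 : ℕ, π (0, m2)) - mu2 * c2
      = la2 * (∑' m1 : ℕ, π (m1, 0)) + la1 * p1 * π (0, 0) :=
  stmt2_general la1 la2 mu1 mu2 c1 c2 p1 p2 π hπ
end

section
/- If π is an invariant distribution of the random walk (m̄_c(t)), then for all complex numbers x, y with |x| ≤ 1 and |y| ≤ 1, the generating function P(x,y) = Σ_{(m₁,m₂)∈ℕ×ℕ} π(m₁,m₂)·x^{m₁}·y^{m₂} (which converges absolutely) satisfies the functional equation h₁(x,y)·P(x,y) = h₂(x,y)·P(x,0) + h₃(x,y)·P(0,y) + h₄(x,y)·π(0,0). -/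
/-!
Multiply the balance equation at `m` by `x^(m₁+1) y^(m₂+1)` and sum over `m`; everything converges
absolutely because `|π(m) x^m₁ y^m₂| ≤ π(m)`. The outflow side gives
`xy((μ₁c₁ + μ₂c₂)P + D₁ + D₂)`, where `Dᵢ` is the generating function of `π` weighted by the rate at
which coordinate `i` decreases. Each inflow term is the generating function of a shift of `π`, so
reindexing gives `μ₁c₁x²yP + μ₂c₂xy²P + yD₁ + xD₂`. Since the decrease rates only depend on which
coordinates vanish, `D₁ = λ₁(P(x,y) − P(0,y)) + p₂λ₂(P(x,0) − π(0,0))` and symmetrically for `D₂`;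
collecting terms yields the functional equation.
-/

/-- h₁(x,y) = −μ₁c₁x²y − μ₂c₂xy² + (λ₁+λ₂+μ₁c₁+μ₂c₂)xy − λ₁y − λ₂x -/
noncomputable def h1 (la1 la2 mu1 mu2 c1 c2 : ℝ) (x y : ℂ) : ℂ :=
  -((mu1 : ℂ) * c1) * x ^ 2 * y - ((mu2 : ℂ) * c2) * x * y ^ 2
    + ((la1 : ℂ) + la2 + mu1 * c1 + mu2 * c2) * x * y - (la1 : ℂ) * y - (la2 : ℂ) * x

/-- h₂(x,y) = λ₂((1−p₂)xy − x + p₂y) -/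
noncomputable def h2 (la2 p2 : ℝ) (x y : ℂ) : ℂ :=
  (la2 : ℂ) * ((1 - (p2 : ℂ)) * x * y - x + (p2 : ℂ) * y)

/-- h₃(x,y) = λ₁((1−p₁)xy − y + p₁x) -/
noncomputable def h3 (la1 p1 : ℝ) (x y : ℂ) : ℂ :=
  (la1 : ℂ) * ((1 - (p1 : ℂ)) * x * y - y + (p1 : ℂ) * x)

/-- h₄(x,y) = (λ₁p₁+λ₂p₂)xy − p₂λ₂y − p₁λ₁x -/
noncomputable def h4 (la1 la2 p1 p2 : ℝ) (x y : ℂ) : ℂ :=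
  ((la1 : ℂ) * p1 + (la2 : ℂ) * p2) * x * y - (p2 : ℂ) * la2 * y - (p1 : ℂ) * la1 * x

/-- The bivariate generating function P(x,y) = Σ π(m₁,m₂) x^{m₁} y^{m₂}. -/
noncomputable def genFun (π : ℕ × ℕ → ℝ) (x y : ℂ) : ℂ :=
  ∑' m : ℕ × ℕ, (π m : ℂ) * x ^ m.1 * y ^ m.2

noncomputable def genTerm (π : ℕ × ℕ → ℝ) (x y : ℂ) (m : ℕ × ℕ) : ℂ :=
  (π m : ℂ) * x ^ m.1 * y ^ m.2

def downRateFst (la1 la2 p2 : ℝ) (m : ℕ × ℕ) : ℝ :=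
  (la1 + p2 * la2 * if m.2 = 0 then 1 else 0) * if 0 < m.1 then 1 else 0

def downRateSnd (la1 la2 p1 : ℝ) (m : ℕ × ℕ) : ℝ :=
  (la2 + p1 * la1 * if m.1 = 0 then 1 else 0) * if 0 < m.2 then 1 else 0

section Shift

variable {α : Type*} [AddCommMonoid α] [TopologicalSpace α] {f : ℕ × ℕ → α} {a : α}

theorem hasSum_comp_succ_fst_iff (hf : ∀ m : ℕ × ℕ, m.1 = 0 → f m = 0) :
    HasSum (fun m : ℕ × ℕ => f (m.1 + 1, m.2)) a ↔ HasSum f a :=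
  (Nat.succ_injective.prodMap Function.injective_id).hasSum_iff fun m hm => hf m <| by
    by_contra h
    exact hm ⟨(m.1 - 1, m.2), Prod.ext (Nat.succ_pred_eq_of_ne_zero h) rfl⟩

theorem hasSum_comp_succ_snd_iff (hf : ∀ m : ℕ × ℕ, m.2 = 0 → f m = 0) :
    HasSum (fun m : ℕ × ℕ => f (m.1, m.2 + 1)) a ↔ HasSum f a :=
  (Function.injective_id.prodMap Nat.succ_injective).hasSum_iff fun m hm => hf m <| by
    by_contra h
    exact hm ⟨(m.1, m.2 - 1), Prod.ext rfl (Nat.succ_pred_eq_of_ne_zero h)⟩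

end Shift

section GenFun

variable {π : ℕ × ℕ → ℝ} {x y : ℂ}

theorem norm_genTerm_le (hx : ‖x‖ ≤ 1) (hy : ‖y‖ ≤ 1) (m : ℕ × ℕ) :
    ‖genTerm π x y m‖ ≤ ‖π m‖ := by
  simp only [genTerm, norm_mul, norm_pow, Complex.norm_real]
  calc ‖π m‖ * ‖x‖ ^ m.1 * ‖y‖ ^ m.2 ≤ ‖π m‖ * 1 * 1 := by
        gcongr <;> exact pow_le_one₀ (norm_nonneg _) ‹_›
    _ = ‖π m‖ := by ring

theorem summable_norm_genTerm (hπ : Summable π) (hx : ‖x‖ ≤ 1) (hy : ‖y‖ ≤ 1) :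
    Summable fun m => ‖genTerm π x y m‖ :=
  hπ.norm.of_nonneg_of_le (fun _ => norm_nonneg _) (norm_genTerm_le hx hy)

theorem hasSum_genTerm (hπ : Summable π) (hx : ‖x‖ ≤ 1) (hy : ‖y‖ ≤ 1) :
    HasSum (genTerm π x y) (genFun π x y) :=
  (summable_norm_genTerm hπ hx hy).of_norm.hasSum

theorem hasSum_genTerm_zero_zero (π : ℕ × ℕ → ℝ) : HasSum (genTerm π 0 0) (π (0, 0)) := by
  convert hasSum_single (f := genTerm π 0 0) (0, 0) fun m hm => ?_
  · simp [genTerm]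
  · obtain ⟨m1, m2⟩ := m
    rcases Nat.eq_zero_or_pos m1 with rfl | h1
    · simp_all [genTerm]
    · simp [genTerm, h1.ne']

variable {P Px0 P0y : ℂ}

theorem hasSum_downRateFst_mul_genTerm (la1 la2 p2 : ℝ) (hP : HasSum (genTerm π x y) P)
    (hP0y : HasSum (genTerm π 0 y) P0y) (hPx0 : HasSum (genTerm π x 0) Px0) :
    HasSum (fun m => (downRateFst la1 la2 p2 m : ℂ) * genTerm π x y m)
      (la1 * (P - P0y) + p2 * la2 * (Px0 - π (0, 0))) := by
  refine ((hP.sub hP0y).mul_left _ |>.add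
    ((hPx0.sub (hasSum_genTerm_zero_zero π)).mul_left _)).congr_fun fun ⟨m1, m2⟩ => ?_
  rcases m1 with _ | m1 <;> rcases m2 with _ | m2 <;>
    simp [downRateFst, genTerm, add_mul]

theorem hasSum_downRateSnd_mul_genTerm (la1 la2 p1 : ℝ) (hP : HasSum (genTerm π x y) P)
    (hP0y : HasSum (genTerm π 0 y) P0y) (hPx0 : HasSum (genTerm π x 0) Px0) :
    HasSum (fun m => (downRateSnd la1 la2 p1 m : ℂ) * genTerm π x y m)
      (la2 * (P - Px0) + p1 * la1 * (P0y - π (0, 0))) := by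
  refine ((hP.sub hPx0).mul_left _ |>.add
    ((hP0y.sub (hasSum_genTerm_zero_zero π)).mul_left _)).congr_fun fun ⟨m1, m2⟩ => ?_
  rcases m1 with _ | m1 <;> rcases m2 with _ | m2 <;>
    simp [downRateSnd, genTerm, add_mul]

end GenFun

namespace IsInvariantDist

variable {la1 la2 mu1 mu2 c1 c2 p1 p2 : ℝ} {π : ℕ × ℕ → ℝ} {x y P D1 D2 : ℂ}

theorem summable_s5 (hπ : IsInvariantDist la1 la2 mu1 mu2 c1 c2 p1 p2 π) : Summable π := by
  by_contra h
  simpa [tsum_eq_zero_of_not_summable h] using hπ.2.1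

theorem balance (hπ : IsInvariantDist la1 la2 mu1 mu2 c1 c2 p1 p2 π) (m : ℕ × ℕ) :
    π m * (mu1 * c1 + mu2 * c2 + downRateFst la1 la2 p2 m + downRateSnd la1 la2 p1 m)
      = mu1 * c1 * π (m.1 - 1, m.2) * (if 0 < m.1 then 1 else 0)
        + mu2 * c2 * π (m.1, m.2 - 1) * (if 0 < m.2 then 1 else 0)
        + downRateFst la1 la2 p2 (m.1 + 1, m.2) * π (m.1 + 1, m.2)
        + downRateSnd la1 la2 p1 (m.1, m.2 + 1) * π (m.1, m.2 + 1) := by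
  simpa only [downRateFst, downRateSnd, Nat.succ_pos, if_true, mul_one, Nat.succ_ne_zero,
    add_assoc] using hπ.2.2 m.1 m.2


theorem genFun_balance (hπ : IsInvariantDist la1 la2 mu1 mu2 c1 c2 p1 p2 π)
    (hP : HasSum (genTerm π x y) P)
    (hD1 : HasSum (fun m => (downRateFst la1 la2 p2 m : ℂ) * genTerm π x y m) D1)
    (hD2 : HasSum (fun m => (downRateSnd la1 la2 p1 m : ℂ) * genTerm π x y m) D2) :
    x * y * ((mu1 * c1 + mu2 * c2) * P + D1 + D2)
      = mu1 * c1 * x ^ 2 * y * P + mu2 * c2 * x * y ^ 2 * P + y * D1 + x * D2 := by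
  have hOut : HasSum (fun m : ℕ × ℕ => x ^ (m.1 + 1) * y ^ (m.2 + 1)
      * ((π m * (mu1 * c1 + mu2 * c2 + downRateFst la1 la2 p2 m + downRateSnd la1 la2 p1 m) : ℝ) : ℂ))
      (x * y * ((mu1 * c1 + mu2 * c2) * P + D1 + D2)) :=
    ((((hP.mul_left _).add hD1).add hD2).mul_left _).congr_fun fun m => by
      simp only [genTerm]; push_cast; ring
  have hUp1 : HasSum (fun m : ℕ × ℕ => x ^ (m.1 + 1) * y ^ (m.2 + 1)
      * ((mu1 * c1 * π (m.1 - 1, m.2) * (if 0 < m.1 then 1 else 0) : ℝ) : ℂ))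
      (mu1 * c1 * x ^ 2 * y * P) :=
    (hasSum_comp_succ_fst_iff fun m hm => by simp [hm]).mp <|
      (hP.mul_left _).congr_fun fun m => by simp [genTerm]; ring
  have hUp2 : HasSum (fun m : ℕ × ℕ => x ^ (m.1 + 1) * y ^ (m.2 + 1)
      * ((mu2 * c2 * π (m.1, m.2 - 1) * (if 0 < m.2 then 1 else 0) : ℝ) : ℂ))
      (mu2 * c2 * x * y ^ 2 * P) :=
    (hasSum_comp_succ_snd_iff fun m hm => by simp [hm]).mp <|
      (hP.mul_left _).congr_fun fun m => by simp [genTerm]; ring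
  have hDown1 : HasSum (fun m : ℕ × ℕ => x ^ (m.1 + 1) * y ^ (m.2 + 1)
      * ((downRateFst la1 la2 p2 (m.1 + 1, m.2) * π (m.1 + 1, m.2) : ℝ) : ℂ)) (y * D1) :=
    ((hasSum_comp_succ_fst_iff fun m hm => by simp [downRateFst, hm]).mpr
      (hD1.mul_left y)).congr_fun fun m => by simp only [genTerm]; push_cast; ring
  have hDown2 : HasSum (fun m : ℕ × ℕ => x ^ (m.1 + 1) * y ^ (m.2 + 1)
      * ((downRateSnd la1 la2 p1 (m.1, m.2 + 1) * π (m.1, m.2 + 1) : ℝ) : ℂ)) (x * D2) :=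
    ((hasSum_comp_succ_snd_iff fun m hm => by simp [downRateSnd, hm]).mpr
      (hD2.mul_left x)).congr_fun fun m => by simp only [genTerm]; push_cast; ring
  refine hOut.unique ((((hUp1.add hUp2).add hDown1).add hDown2).congr_fun fun m => ?_)
  rw [hπ.balance m]
  push_cast
  ring

end IsInvariantDist

theorem stmt5_general (la1 la2 mu1 mu2 c1 c2 p1 p2 : ℝ)
    (π : ℕ × ℕ → ℝ) (hπ : IsInvariantDist la1 la2 mu1 mu2 c1 c2 p1 p2 π) :
    ∀ x y : ℂ, ‖x‖ ≤ 1 → ‖y‖ ≤ 1 →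
      Summable (fun m : ℕ × ℕ => ‖(π m : ℂ) * x ^ m.1 * y ^ m.2‖) ∧
      h1 la1 la2 mu1 mu2 c1 c2 x y * genFun π x y
        = h2 la2 p2 x y * genFun π x 0 + h3 la1 p1 x y * genFun π 0 y
          + h4 la1 la2 p1 p2 x y * (π (0, 0) : ℂ) := by
  intro x y hx hy
  refine ⟨summable_norm_genTerm hπ.summable_s5 hx hy, ?_⟩
  have h0 : ‖(0 : ℂ)‖ ≤ 1 := by simp
  have hP := hasSum_genTerm hπ.summable_s5 hx hy
  have hP0y := hasSum_genTerm hπ.summable_s5 h0 hy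
  have hPx0 := hasSum_genTerm hπ.summable_s5 hx h0
  have hD1 := hasSum_downRateFst_mul_genTerm la1 la2 p2 hP hP0y hPx0
  have hD2 := hasSum_downRateSnd_mul_genTerm la1 la2 p1 hP hP0y hPx0
  have hbal := hπ.genFun_balance hP hD1 hD2
  simp only [h1, h2, h3, h4]
  linear_combination hbal

theorem stmt5 (la1 la2 mu1 mu2 c1 c2 p1 p2 : ℝ)
    (hla1 : 0 < la1) (hla2 : 0 < la2) (hmu1 : 0 < mu1) (hmu2 : 0 < mu2)
    (hc1 : 0 < c1) (hc2 : 0 < c2)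
    (hp1 : 0 ≤ p1) (hp1' : p1 ≤ 1) (hp2 : 0 ≤ p2) (hp2' : p2 ≤ 1)
    (π : ℕ × ℕ → ℝ) (hπ : IsInvariantDist la1 la2 mu1 mu2 c1 c2 p1 p2 π) :
    ∀ x y : ℂ, ‖x‖ ≤ 1 → ‖y‖ ≤ 1 →
      Summable (fun m : ℕ × ℕ => ‖(π m : ℂ) * x ^ m.1 * y ^ m.2‖) ∧
      h1 la1 la2 mu1 mu2 c1 c2 x y * genFun π x y
        = h2 la2 p2 x y * genFun π x 0 + h3 la1 p1 x y * genFun π 0 y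
          + h4 la1 la2 p1 p2 x y * (π (0, 0) : ℂ) :=
  stmt5_general la1 la2 mu1 mu2 c1 c2 p1 p2 π hπ
end

section
/- Assume λ₂ ≠ μ₂c₂. Then the quartic polynomial Δ₂ has exactly four real roots x₁ < x₂ < x₃ < x₄, all of which are positive and pairwise distinct, and they satisfy 0 < x₁ < x₂ < 1 < x₃ < x₄. -/
/-- Δ₂(x) = (μ₁c₁x² − (λ₁+λ₂+μ₁c₁+μ₂c₂)x + λ₁)² − 4μ₂c₂λ₂x² -/
noncomputable def Delta2 (la1 la2 mu1 mu2 c1 c2 : ℝ) (x : ℝ) : ℝ :=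
  (mu1 * c1 * x ^ 2 - (la1 + la2 + mu1 * c1 + mu2 * c2) * x + la1) ^ 2
    - 4 * mu2 * c2 * la2 * x ^ 2

/-!
With `r = √(μ₂c₂λ₂)`, `Δ₂` is a difference of squares, `Δ₂ = f₊ f₋` with
`f_±(x) = μ₁c₁x² − (λ₁+λ₂+μ₁c₁+μ₂c₂ ± 2r)x + λ₁`.
Both quadratics are negative at `1`: `f₊(1) = −(λ₂ + μ₂c₂ + 2r)` and `f₋(1) = −(√λ₂ − √(μ₂c₂))²`,
so each has one root below `1` and one above, and the roots are positive since `f_±(0) = λ₁ > 0`.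
Finally `f₊(x) = f₋(x) − 4rx` is negative at the roots of `f₋`, so these lie strictly
between the roots of `f₊`.
-/

theorem mem_Ioo_of_mul_sub_mul_sub_neg {a p q y : ℝ} (ha : 0 < a) (hpq : p ≤ q)
    (h : a * (y - p) * (y - q) < 0) : y ∈ Set.Ioo p q := by
  have hneg : (y - p) * (y - q) < 0 := by
    by_contra! h'
    nlinarith
  constructor <;> by_contra! h' <;> nlinarith

theorem exists_roots_lt_lt_of_quadratic_neg {a b c y : ℝ} (ha : 0 < a)
    (hy : a * y ^ 2 + b * y + c < 0) :
    ∃ p q, p < y ∧ y < q ∧ ∀ x, a * x ^ 2 + b * x + c = a * (x - p) * (x - q) := by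
  have hdisc : 0 < discrim a b c := by
    have : discrim a b c = (2 * a * y + b) ^ 2 - 4 * a * (a * y ^ 2 + b * y + c) := by
      unfold discrim; ring
    nlinarith [sq_nonneg (2 * a * y + b), mul_pos ha (neg_pos.2 hy)]
  set s := √(discrim a b c)
  have hs : s ^ 2 = discrim a b c := Real.sq_sqrt hdisc.le
  have hfac : ∀ x, a * x ^ 2 + b * x + c =
      a * (x - (-b - s) / (2 * a)) * (x - (-b + s) / (2 * a)) := by
    intro x
    unfold discrim at hs
    field_simp
    linear_combination hs
  have hle : (-b - s) / (2 * a) ≤ (-b + s) / (2 * a) :=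
    div_le_div_of_nonneg_right (by linarith [Real.sqrt_nonneg (discrim a b c)]) (by positivity)
  have hmem := mem_Ioo_of_mul_sub_mul_sub_neg ha hle (hfac y ▸ hy)
  exact ⟨_, _, hmem.1, hmem.2, hfac⟩

theorem pos_of_quadratic_eq_mul_sub_mul_sub {a b c p q : ℝ} (ha : 0 < a) (hc : 0 < c)
    (hq : 0 < q) (h : ∀ x, a * x ^ 2 + b * x + c = a * (x - p) * (x - q)) : 0 < p := by
  have h0 := h 0
  by_contra! hp
  nlinarith [mul_nonneg ha.le (mul_nonneg (neg_nonneg.2 hp) hq.le)]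

namespace Delta2

theorem eq_mul {la1 la2 mu1 mu2 c1 c2 r : ℝ} (hr : r ^ 2 = mu2 * c2 * la2) (x : ℝ) :
    Delta2 la1 la2 mu1 mu2 c1 c2 x =
      (mu1 * c1 * x ^ 2 + -(la1 + la2 + mu1 * c1 + mu2 * c2 + 2 * r) * x + la1) *
        (mu1 * c1 * x ^ 2 + -(la1 + la2 + mu1 * c1 + mu2 * c2 - 2 * r) * x + la1) := by
  unfold Delta2
  linear_combination (4 * x ^ 2) * hr

end Delta2

theorem stmt9 (la1 la2 mu1 mu2 c1 c2 : ℝ)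
    (hla1 : 0 < la1) (hla2 : 0 < la2) (hmu1 : 0 < mu1) (hmu2 : 0 < mu2)
    (hc1 : 0 < c1) (hc2 : 0 < c2) (hne : la2 ≠ mu2 * c2) :
    ∃ x1 x2 x3 x4 : ℝ,
      0 < x1 ∧ x1 < x2 ∧ x2 < 1 ∧ 1 < x3 ∧ x3 < x4 ∧
      ∀ x : ℝ, Delta2 la1 la2 mu1 mu2 c1 c2 x = 0 ↔ (x = x1 ∨ x = x2 ∨ x = x3 ∨ x = x4) := by
  have ha : 0 < mu1 * c1 := by positivity
  set S := la1 + la2 + mu1 * c1 + mu2 * c2 with hS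
  set u := √la2
  set v := √(mu2 * c2)
  have hu : u ^ 2 = la2 := Real.sq_sqrt hla2.le
  have hv : v ^ 2 = mu2 * c2 := Real.sq_sqrt (by positivity)
  have hr : 0 < u * v := by positivity
  have huv : u - v ≠ 0 := fun h ↦ hne (by rw [← hu, ← hv, sub_eq_zero.1 h])
  obtain ⟨x1, x4, hx1, hx4, hplus⟩ := exists_roots_lt_lt_of_quadratic_neg (y := 1)
    (b := -(S + 2 * (u * v))) (c := la1) ha (by rw [hS]; nlinarith [mul_pos hmu2 hc2])
  obtain ⟨x2, x3, hx2, hx3, hminus⟩ := exists_roots_lt_lt_of_quadratic_neg (y := 1)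
    (b := -(S - 2 * (u * v))) (c := la1) ha (by rw [hS]; nlinarith [sq_pos_of_ne_zero huv])
  have hx1pos : 0 < x1 := pos_of_quadratic_eq_mul_sub_mul_sub ha hla1 (by linarith) hplus
  have hx2pos : 0 < x2 := pos_of_quadratic_eq_mul_sub_mul_sub ha hla1 (by linarith) hminus
  have between (y : ℝ) (hy : 0 < y) (hroot : mu1 * c1 * (y - x2) * (y - x3) = 0) :
      y ∈ Set.Ioo x1 x4 := by
    refine mem_Ioo_of_mul_sub_mul_sub_neg ha (by linarith) ?_
    nlinarith [hplus y, hminus y, mul_pos hr hy]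
  have hx12 := (between x2 hx2pos (by ring)).1
  have hx34 := (between x3 (by linarith) (by ring)).2
  refine ⟨x1, x2, x3, x4, hx1pos, hx12, hx2, hx3, hx34, fun x ↦ ?_⟩
  rw [Delta2.eq_mul (r := u * v) (by rw [mul_pow, hu, hv]; ring), hplus, hminus]
  simp only [mul_eq_zero, ha.ne', sub_eq_zero, false_or]
  tauto
end

section
/- Let x, y be complex numbers with y ≠ 0, h₁(x,y) = 0 and y·conj(y) = λ₂/(μ₂c₂). Then h₃(x, conj(y))·h₂(x,y) = −(λ₁λ₂(x−1)/(μ₂c₂·y))·(λ₂(1−p₁p₂)·x + y·R_Y(x)). -/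
/-- R_Y(x) = p₁μ₁c₁(1−p₂)x² + (p₁p₂(μ₁c₁+μ₂c₂) − (1−p₂)(λ₂+λ₁p₁))x − p₂(λ₂+λ₁p₁),
as a polynomial over ℂ. -/
noncomputable def RYc (la1 la2 mu1 mu2 c1 c2 p1 p2 : ℝ) (x : ℂ) : ℂ :=
  (p1 : ℂ) * mu1 * c1 * (1 - (p2 : ℂ)) * x ^ 2
    + ((p1 : ℂ) * p2 * ((mu1 : ℂ) * c1 + (mu2 : ℂ) * c2)
        - (1 - (p2 : ℂ)) * ((la2 : ℂ) + la1 * p1)) * x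
    - (p2 : ℂ) * ((la2 : ℂ) + la1 * p1)

theorem Complex.conj_eq_div_of_mul_conj_eq {y r : ℂ} (hy : y ≠ 0)
    (h : y * (starRingEnd ℂ) y = r) : (starRingEnd ℂ) y = r / y :=
  eq_div_of_mul_eq hy (by rw [mul_comm, h])

theorem h3_div_mul_h2_of_h1_eq_zero (la1 la2 mu1 mu2 c1 c2 p1 p2 : ℝ) {x y : ℂ} (hy : y ≠ 0)
    (hmu2 : mu2 ≠ 0) (hc2 : c2 ≠ 0) (hker : h1 la1 la2 mu1 mu2 c1 c2 x y = 0) :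
    h3 la1 p1 x (la2 / ((mu2 : ℂ) * c2 * y)) * h2 la2 p2 x y
      = -((la1 : ℂ) * la2 * (x - 1) / ((mu2 : ℂ) * c2 * y))
          * ((la2 : ℂ) * (1 - (p1 : ℂ) * p2) * x
              + y * RYc la1 la2 mu1 mu2 c1 c2 p1 p2 x) := by
  have hmu2' : (mu2 : ℂ) ≠ 0 := by exact_mod_cast hmu2
  have hc2' : (c2 : ℂ) ≠ 0 := by exact_mod_cast hc2
  simp only [h1, h2, h3, RYc] at hker ⊢
  field_simp
  linear_combination ((la1 : ℂ) * la2 * p1 * ((p2 - 1) * x - p2)) * hker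

theorem stmt11_general (la1 la2 mu1 mu2 c1 c2 p1 p2 : ℝ)
    (hmu2 : 0 < mu2) (hc2 : 0 < c2)
    (x y : ℂ) (hy : y ≠ 0)
    (hker : h1 la1 la2 mu1 mu2 c1 c2 x y = 0)
    (hmod : y * (starRingEnd ℂ) y = (la2 : ℂ) / ((mu2 : ℂ) * c2)) :
    h3 la1 p1 x ((starRingEnd ℂ) y) * h2 la2 p2 x y
      = -((la1 : ℂ) * la2 * (x - 1) / ((mu2 : ℂ) * c2 * y))
          * ((la2 : ℂ) * (1 - (p1 : ℂ) * p2) * x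
              + y * RYc la1 la2 mu1 mu2 c1 c2 p1 p2 x) := by
  rw [Complex.conj_eq_div_of_mul_conj_eq hy hmod, div_div]
  exact h3_div_mul_h2_of_h1_eq_zero la1 la2 mu1 mu2 c1 c2 p1 p2 hy hmu2.ne' hc2.ne' hker

theorem stmt11 (la1 la2 mu1 mu2 c1 c2 p1 p2 : ℝ)
    (hla1 : 0 < la1) (hla2 : 0 < la2) (hmu1 : 0 < mu1) (hmu2 : 0 < mu2)
    (hc1 : 0 < c1) (hc2 : 0 < c2)
    (hp1 : 0 ≤ p1) (hp1' : p1 ≤ 1) (hp2 : 0 ≤ p2) (hp2' : p2 ≤ 1)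
    (x y : ℂ) (hy : y ≠ 0)
    (hker : h1 la1 la2 mu1 mu2 c1 c2 x y = 0)
    (hmod : y * (starRingEnd ℂ) y = (la2 : ℂ) / ((mu2 : ℂ) * c2)) :
    h3 la1 p1 x ((starRingEnd ℂ) y) * h2 la2 p2 x y
      = -((la1 : ℂ) * la2 * (x - 1) / ((mu2 : ℂ) * c2 * y))
          * ((la2 : ℂ) * (1 - (p1 : ℂ) * p2) * x
              + y * RYc la1 la2 mu1 mu2 c1 c2 p1 p2 x) :=
  stmt11_general la1 la2 mu1 mu2 c1 c2 p1 p2 hmu2 hc2 x y hy hker hmod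
end

section
/- Assume p₁p₂ < 1. For all complex numbers x, y with h₂(x,y) ≠ 0, Im(h₄(x,y)/h₂(x,y)) = −(p₂(λ₂+λ₁p₁)/(λ₁(1−p₁p₂)))·Re(i·h₃(x,y)/h₂(x,y)). -/
/-- The coefficients solve the (consistent, overdetermined) linear system obtained by comparing
the coefficients of `x * y`, `x` and `y`; its determinant is a multiple of `1 - p₁ p₂`. -/
theorem h4_eq_add_h2_h3 {la1 la2 p1 p2 : ℝ} (hla1 : la1 ≠ 0) (hla2 : la2 ≠ 0)
    (hp : p1 * p2 ≠ 1) (x y : ℂ) :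
    h4 la1 la2 p1 p2 x y
      = ((p1 * (la1 + p2 * la2) / (la2 * (1 - p1 * p2)) : ℝ) : ℂ) * h2 la2 p2 x y
        + ((p2 * (la2 + la1 * p1) / (la1 * (1 - p1 * p2)) : ℝ) : ℂ) * h3 la1 p1 x y := by
  have hd : (1 : ℂ) - p1 * p2 ≠ 0 := by
    rw [sub_ne_zero]
    exact_mod_cast hp.symm
  have hla1' : (la1 : ℂ) ≠ 0 := by exact_mod_cast hla1
  have hla2' : (la2 : ℂ) ≠ 0 := by exact_mod_cast hla2
  simp only [h2, h3, h4]
  push_cast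
  field_simp
  ring

theorem Complex.im_div_of_eq_ofReal_mul_add {u v w : ℂ} {a b : ℝ} (hw : w ≠ 0)
    (h : u = a * w + b * v) : (u / w).im = -b * (I * v / w).re := by
  have hdiv : u / w = a + b * (v / w) := by
    rw [h, add_div, mul_div_assoc, div_self hw, mul_one, mul_div_assoc]
  rw [hdiv, mul_div_assoc]
  simp only [add_im, ofReal_im, im_ofReal_mul, I_mul_re]
  ring

theorem stmt12_general (la1 la2 p1 p2 : ℝ)
    (hla1 : 0 < la1) (hla2 : 0 < la2)
    (hp : p1 * p2 < 1) :
    ∀ x y : ℂ, h2 la2 p2 x y ≠ 0 →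
      (h4 la1 la2 p1 p2 x y / h2 la2 p2 x y).im
        = -(p2 * (la2 + la1 * p1) / (la1 * (1 - p1 * p2)))
            * (Complex.I * h3 la1 p1 x y / h2 la2 p2 x y).re := fun x y hne =>
  Complex.im_div_of_eq_ofReal_mul_add hne (h4_eq_add_h2_h3 hla1.ne' hla2.ne' hp.ne x y)

theorem stmt12 (la1 la2 mu1 mu2 c1 c2 p1 p2 : ℝ)
    (hla1 : 0 < la1) (hla2 : 0 < la2) (hmu1 : 0 < mu1) (hmu2 : 0 < mu2)
    (hc1 : 0 < c1) (hc2 : 0 < c2)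
    (hp1 : 0 ≤ p1) (hp1' : p1 ≤ 1) (hp2 : 0 ≤ p2) (hp2' : p2 ≤ 1)
    (hp : p1 * p2 < 1) :
    ∀ x y : ℂ, h2 la2 p2 x y ≠ 0 →
      (h4 la1 la2 p1 p2 x y / h2 la2 p2 x y).im
        = -(p2 * (la2 + la1 * p1) / (la1 * (1 - p1 * p2)))
            * (Complex.I * h3 la1 p1 x y / h2 la2 p2 x y).re :=
  stmt12_general la1 la2 p1 p2 hla1 hla2 hp
end
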